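/- For bases A, B of a matroid M on a linearly ordered set E, the following are equivalent: (1) IP(A) ∩ EP(B) = ∅; (2) (A \ IA(A)) ∪ EA(A) ⊆ (B \ IA(B)) ∪ EA(B); (3) IP(A) ∪ EA(A) ⊆ IP(B) ∪ EA(B). (This common condition defines the external/internal order A ≤_{ext/int} B on bases.) -/

import Mathlib

open Set

variable {α : Type*}

/-- A circuit of a matroid: a minimal dependent set. -/
def Matroid.Cct (M : Matroid α) (C : Set α) : Prop :=
  M.Dep C ∧ ∀ D ⊂ C, ¬ M.Dep D

/-- The externally active elements with respect to `S`: elements `e ∈ E \ S` that are the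
maximum of some circuit contained in `S ∪ {e}`. -/
def Matroid.exA [LinearOrder α] (M : Matroid α) (S : Set α) : Set α :=
  {e | e ∈ M.E \ S ∧ ∃ C, M.Cct C ∧ C ⊆ insert e S ∧ ∀ f ∈ C, f ≤ e}

/-- The externally passive elements with respect to `S`. -/
def Matroid.exP [LinearOrder α] (M : Matroid α) (S : Set α) : Set α :=
  (M.E \ S) \ M.exA S

/-- The internally active elements with respect to `S`: elements of `S` that are externally
active with respect to `E \ S` in the dual matroid. -/
def Matroid.inA [LinearOrder α] (M : Matroid α) (S : Set α) : Set α :=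
  {i | i ∈ S ∧ i ∈ M✶.exA (M.E \ S)}

/-- The internally passive elements with respect to `S`. -/
def Matroid.inP [LinearOrder α] (M : Matroid α) (S : Set α) : Set α :=
  S \ M.inA S

/-- `I` is internally related to the basis `B` if `I = B \ Y` for some `Y ⊆ IA(B)`. -/
def Matroid.IntRelated [LinearOrder α] (M : Matroid α) (I B : Set α) : Prop :=
  M.IsBase B ∧ ∃ Y ⊆ M.inA B, I = B \ Y

/-- The external/internal order on independent sets. -/
def Matroid.extIntLE [LinearOrder α] (M : Matroid α) (I J : Set α) : Prop :=
  ((∃ B, M.IntRelated I B ∧ M.IntRelated J B) ∧ I ⊆ J) ∨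
  ((¬ ∃ B, M.IntRelated I B ∧ M.IntRelated J B) ∧
    (I \ M.inA I) ∪ M.exA I ⊆ (J \ M.inA J) ∪ M.exA J)

/-!
For an independent set `X`, `e ∈ EA(X)` iff `e ∈ cl(X ∩ (-∞, e))`, and `IA(B) = EA_{M✶}(E \ B)`.
The elements below the maximum of a circuit `C ⊆ A ∪ {x}` are internally passive in `A`, since
a cocircuit witnessing internal activity would meet `C` in a single element.

Assume `IP(A) ∩ EP(B) = ∅`. An externally active `x ∉ B` of `A` stays externally active in `B`,
because its circuit below `x` lies in `IP(A) ∪ {x} ⊆ B ∪ EA(B) ∪ {x}`, which is spanned by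
`B ∩ (-∞, x)`. No `x ∈ EA(A)` lies in `IA(B)`: its circuit and cocircuit would share a second,
smaller element, internally passive in `A` and externally passive in `B`. Finally the hypothesis
is invariant under `(M, A, B) ↦ (M✶, E \ B, E \ A)`, which turns the first statement into
`IA(B) ∩ A ⊆ IA(A)`. The conditions (2) and (3) coincide, as `IP(A) = A \ IA(A)`.
-/

namespace Matroid

variable {M : Matroid α}

lemma cct_iff_isCircuit {C : Set α} : M.Cct C ↔ M.IsCircuit C :=
  minimal_iff_forall_ssubset.symm

variable [LinearOrder α] {A B C D S X : Set α} {e x y : α}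

lemma exA_subset_diff (M : Matroid α) (S : Set α) : M.exA S ⊆ M.E \ S :=
  fun _ he ↦ he.1

lemma Indep.mem_exA_iff (hX : M.Indep X) :
    e ∈ M.exA X ↔ e ∈ M.E \ X ∧ e ∈ M.closure (X ∩ Iio e) := by
  constructor
  · rintro ⟨heX, C, hC, hCX, hCe⟩
    rw [cct_iff_isCircuit] at hC
    have heC : e ∈ C := by
      by_contra heC
      exact hC.not_indep (hX.subset fun f hf ↦ (hCX hf).resolve_left (ne_of_mem_of_not_mem hf heC))
    have hCe' : C \ {e} ⊆ X ∩ Iio e := fun f ⟨hfC, hfe⟩ ↦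
      ⟨(hCX hfC).resolve_left hfe, (hCe f hfC).lt_of_ne hfe⟩
    exact ⟨heX, M.closure_subset_closure hCe' (hC.mem_closure_sdiff_singleton_of_mem heC)⟩
  · rintro ⟨heX, he⟩
    obtain ⟨C, hCX, hC, -⟩ := M.exists_isCircuit_of_mem_closure he fun h ↦ h.2.false
    refine ⟨heX, C, cct_iff_isCircuit.2 hC, hCX.trans (insert_subset_insert inter_subset_left),
      fun f hf ↦ ?_⟩
    rcases hCX hf with rfl | hf
    exacts [le_rfl, hf.2.le]

lemma Indep.mem_closure_inter_Iio (hX : M.Indep X) (hy : y ∈ X ∪ M.exA X) (hyx : y < x) :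
    y ∈ M.closure (X ∩ Iio x) := by
  rcases hy with hy | hy
  · exact M.subset_closure _ (inter_subset_left.trans hX.subset_ground) ⟨hy, hyx⟩
  · exact M.closure_subset_closure (inter_subset_inter_right _ (Iio_subset_Iio hyx.le))
      (hX.mem_exA_iff.1 hy).2

lemma dual_exA_compl (hS : S ⊆ M.E) : M✶.exA (M.E \ S) = M.inA S := by
  have hsub : M✶.exA (M.E \ S) ⊆ S := by
    simpa only [dual_ground, sdiff_sdiff_cancel_left hS] using M✶.exA_subset_diff (M.E \ S)
  ext i
  exact ⟨fun hi ↦ ⟨hsub hi, hi⟩, fun hi ↦ hi.2⟩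

lemma dual_inA_compl (hS : S ⊆ M.E) : M✶.inA (M.E \ S) = M.exA S := by
  have h := dual_exA_compl (M := M✶) (S := M.E \ S) sdiff_subset
  rw [dual_dual, dual_ground, sdiff_sdiff_cancel_left hS] at h
  exact h.symm

lemma dual_inP_compl (hS : S ⊆ M.E) : M✶.inP (M.E \ S) = M.exP S := by
  rw [inP, dual_inA_compl hS, exP]

lemma dual_exP_compl (hS : S ⊆ M.E) : M✶.exP (M.E \ S) = M.inP S := by
  rw [exP, dual_exA_compl hS, dual_ground, sdiff_sdiff_cancel_left hS, inP]

lemma IsCircuit.notMem_inA_of_lt (hC : M.IsCircuit C) (hA : M.IsBase A) (hCA : C ⊆ insert x A)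
    (hyC : y ∈ C) (hyx : y < x) : y ∉ M.inA A := by
  intro hy
  rw [← dual_exA_compl hA.subset_ground, hA.compl_isBase_dual.indep.mem_exA_iff] at hy
  obtain ⟨D, hDA, hD, hyD⟩ := M✶.exists_isCircuit_of_mem_closure hy.2 fun h ↦ h.2.false
  refine hC.inter_isCocircuit_ne_singleton hD (eq_singleton_iff_unique_mem.2 ⟨⟨hyC, hyD⟩, ?_⟩)
  rintro z ⟨hzC, hzD⟩
  refine (hDA hzD).resolve_right ?_
  rintro ⟨⟨-, hzA⟩, hzy⟩
  rcases hCA hzC with rfl | hzA'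
  exacts [(hzy.trans hyx).false, hzA hzA']

lemma IsCocircuit.notMem_exA_of_lt (hD : M.IsCocircuit D) (hB : M.IsBase B)
    (hDB : D ⊆ insert x (M.E \ B)) (hyD : y ∈ D) (hyx : y < x) : y ∉ M.exA B := by
  rw [← dual_inA_compl hB.subset_ground]
  exact hD.isCircuit.notMem_inA_of_lt hB.compl_isBase_dual hDB hyD hyx

lemma inP_subset_union_exA (hA : A ⊆ M.E) (hAB : Disjoint (M.inP A) (M.exP B)) :
    M.inP A ⊆ B ∪ M.exA B := by
  intro y hy
  by_contra h
  rw [mem_union, not_or] at h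
  exact disjoint_left.1 hAB hy ⟨⟨hA hy.1, h.1⟩, h.2⟩

section Disjoint

variable (hA : M.IsBase A) (hB : M.IsBase B) (hAB : Disjoint (M.inP A) (M.exP B))
include hA hB hAB

lemma exA_diff_subset_exA : M.exA A \ B ⊆ M.exA B := by
  rintro x ⟨hx, hxB⟩
  obtain ⟨hxA, hxcl⟩ := hA.indep.mem_exA_iff.1 hx
  obtain ⟨C, hCA, hC, hxC⟩ := M.exists_isCircuit_of_mem_closure hxcl fun h ↦ h.2.false
  have hCB : C \ {x} ⊆ M.closure (B ∩ Iio x) := by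
    rintro y ⟨hyC, hyx : y ≠ x⟩
    obtain ⟨hyA, hyx⟩ := (hCA hyC).resolve_left hyx
    have hyP : y ∈ M.inP A := ⟨hyA,
      hC.notMem_inA_of_lt hA (hCA.trans (insert_subset_insert inter_subset_left)) hyC hyx⟩
    exact hB.indep.mem_closure_inter_Iio (inP_subset_union_exA hA.subset_ground hAB hyP) hyx
  exact hB.indep.mem_exA_iff.2 ⟨⟨hxA.1, hxB⟩,
    M.closure_subset_closure_of_subset_closure hCB (hC.mem_closure_sdiff_singleton_of_mem hxC)⟩

lemma inA_inter_subset_inA : M.inA B ∩ A ⊆ M.inA A := by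
  have hAB' : Disjoint (M✶.inP (M.E \ B)) (M✶.exP (M.E \ A)) := by
    rw [dual_inP_compl hB.subset_ground, dual_exP_compl hA.subset_ground]
    exact hAB.symm
  rintro x ⟨hxB, hxA⟩
  rw [← dual_exA_compl hB.subset_ground] at hxB
  rw [← dual_exA_compl hA.subset_ground]
  exact exA_diff_subset_exA hB.compl_isBase_dual hA.compl_isBase_dual hAB' ⟨hxB, fun h ↦ h.2 hxA⟩

lemma disjoint_exA_inA : Disjoint (M.exA A) (M.inA B) := by
  refine disjoint_left.2 fun x hxA hxB ↦ ?_
  have hxB' := hxB.1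
  rw [hA.indep.mem_exA_iff] at hxA
  rw [← dual_exA_compl hB.subset_ground, hB.compl_isBase_dual.indep.mem_exA_iff] at hxB
  obtain ⟨C, hCA, hC, hxC⟩ := M.exists_isCircuit_of_mem_closure hxA.2 fun h ↦ h.2.false
  obtain ⟨D, hDB, hD, hxD⟩ := M✶.exists_isCircuit_of_mem_closure hxB.2 fun h ↦ h.2.false
  obtain ⟨z, ⟨hzC, hzD⟩, hzx⟩ := (hC.isCocircuit_inter_nontrivial hD ⟨x, hxC, hxD⟩).exists_ne x
  obtain ⟨hzA, hzlt⟩ := (hCA hzC).resolve_left hzx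
  obtain ⟨hzB, -⟩ := (hDB hzD).resolve_left hzx
  exact disjoint_left.1 hAB
    ⟨hzA, hC.notMem_inA_of_lt hA (hCA.trans (insert_subset_insert inter_subset_left)) hzC hzlt⟩
    ⟨hzB, (isCocircuit_def.2 hD).notMem_exA_of_lt hB (hDB.trans (insert_subset_insert inter_subset_left)) hzD hzlt⟩

end Disjoint

lemma disjoint_inP_exP_iff (hA : M.IsBase A) (hB : M.IsBase B) :
    Disjoint (M.inP A) (M.exP B) ↔ M.inP A ∪ M.exA A ⊆ M.inP B ∪ M.exA B := by
  refine ⟨fun hAB x hx ↦ ?_, fun h ↦ disjoint_left.2 fun x hxA hxB ↦ ?_⟩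
  · by_cases hxB : x ∈ B
    · refine Or.inl ⟨hxB, fun hxB' ↦ ?_⟩
      rcases hx with hx | hx
      · exact hx.2 (inA_inter_subset_inA hA hB hAB ⟨hxB', hx.1⟩)
      · exact disjoint_left.1 (disjoint_exA_inA hA hB hAB) hx hxB'
    · refine Or.inr ?_
      rcases hx with hx | hx
      · exact (inP_subset_union_exA hA.subset_ground hAB hx).resolve_left hxB
      · exact exA_diff_subset_exA hA hB hAB ⟨hx, hxB⟩
  · rcases h (Or.inl hxA) with h | h
    exacts [hxB.1.2 h.1, hxB.2 h]

end Matroid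

theorem ext_int_order_tfae_general [LinearOrder α] (M : Matroid α)
    (A B : Set α) (hA : M.IsBase A) (hB : M.IsBase B) :
    (M.inP A ∩ M.exP B = ∅ ↔
      (A \ M.inA A) ∪ M.exA A ⊆ (B \ M.inA B) ∪ M.exA B) ∧
    (M.inP A ∩ M.exP B = ∅ ↔
      M.inP A ∪ M.exA A ⊆ M.inP B ∪ M.exA B) := by
  have h := disjoint_iff_inter_eq_empty.symm.trans (M.disjoint_inP_exP_iff hA hB)
  exact ⟨h, h⟩

/-- The three equivalent conditions defining Las Vergnas's external/internal order on bases. -/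
theorem ext_int_order_tfae [LinearOrder α] (M : Matroid α) [M.Finite]
    (A B : Set α) (hA : M.IsBase A) (hB : M.IsBase B) :
    (M.inP A ∩ M.exP B = ∅ ↔
      (A \ M.inA A) ∪ M.exA A ⊆ (B \ M.inA B) ∪ M.exA B) ∧
    (M.inP A ∩ M.exP B = ∅ ↔
      M.inP A ∪ M.exA A ⊆ M.inP B ∪ M.exA B) :=
  ext_int_order_tfae_general M A B hA hB
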